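/- Let 𝓐=(A,δ^A,σ^A,τ^A) and 𝓑=(B,δ^B,σ^B,τ^B) be fuzzy automata over a complete residuated lattice 𝓛 and alphabet X, and let φ be a uniform fuzzy relation between A and B. Then φ is a backward-forward bisimulation between 𝓐 and 𝓑 if and only if: (i) E_A^φ is a forward bisimulation on 𝓐; (ii) E_B^φ is a backward bisimulation on 𝓑; and (iii) φ̃ is an isomorphism of the factor fuzzy automata 𝓐/E_A^φ and 𝓑/E_B^φ. -/
import Mathlib


universe u

/-- A complete residuated lattice: a complete lattice with a commutative monoid
structure whose unit is the top element, together with a residuum operation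
forming an adjoint pair with the multiplication. -/
class CompleteResiduatedLattice (L : Type*) extends CompleteLattice L, CommMonoid L where
  /-- the residuum operation `→` -/
  res : L → L → L
  /-- the adjunction property -/
  adjunction : ∀ x y z : L, x * y ≤ z ↔ x ≤ res y z
  /-- the multiplicative unit `1` is the greatest element -/
  one_eq_top : (1 : L) = ⊤

namespace FuzzyAutomataBisim

/-- A fuzzy automaton over `L` and alphabet `X`, with state set `A`. -/
structure FuzzyAutomaton (L : Type*) [CompleteResiduatedLattice L] (X A : Type*) where
  δ : A → X → A → L
  σ : A → L
  τ : A → L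

variable {L X A B C : Type*} [CompleteResiduatedLattice L]

/-- biresiduum `x ↔ y = (x → y) ⊓ (y → x)` -/
def bires (x y : L) : L :=
  CompleteResiduatedLattice.res x y ⊓ CompleteResiduatedLattice.res y x

/-- inverse of a fuzzy relation -/
def inv (φ : A → B → L) : B → A → L := fun b a => φ a b

/-- composition of fuzzy relations -/
def rcomp (φ : A → B → L) (ψ : B → C → L) : A → C → L := fun a c => ⨆ b, φ a b * ψ b c

/-- composition of a fuzzy set with a fuzzy relation -/
def scomp (f : A → L) (φ : A → B → L) : B → L := fun b => ⨆ a, f a * φ a b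

/-- composition of a fuzzy relation with a fuzzy set -/
def rscomp (φ : A → B → L) (g : B → L) : A → L := fun a => ⨆ b, φ a b * g b

/-- degree of overlapping of two fuzzy sets -/
def sdot (f g : A → L) : L := ⨆ a, f a * g a

/-- kernel `E_A^φ` of a fuzzy relation -/
def ker (φ : A → B → L) : A → A → L := fun a₁ a₂ => ⨅ b, bires (φ a₁ b) (φ a₂ b)

/-- co-kernel `E_B^φ` of a fuzzy relation -/
def coker (φ : A → B → L) : B → B → L := fun b₁ b₂ => ⨅ a, bires (φ a b₁) (φ a b₂)

/-- `φ` is an `L`-function -/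
def IsLFun (φ : A → B → L) : Prop := ∀ a, ∃ b, φ a b = 1

/-- `φ` is surjective, i.e. `φ⁻¹` is an `L`-function -/
def IsSurj (φ : A → B → L) : Prop := ∀ b, ∃ a, φ a b = 1

/-- `φ` is a partial fuzzy function: `φ ∘ φ⁻¹ ∘ φ ≤ φ` -/
def IsPFF (φ : A → B → L) : Prop := rcomp (rcomp φ (inv φ)) φ ≤ φ

/-- `φ` is a uniform fuzzy relation: a partial fuzzy function that is a
surjective `L`-function -/
def IsUniform (φ : A → B → L) : Prop := IsPFF φ ∧ IsLFun φ ∧ IsSurj φ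

/-- the set of crisp descriptions of `φ` -/
def CR (φ : A → B → L) : Set (A → B) := {ψ | ∀ a, φ a (ψ a) = 1}

/-- `ψ : A → B` is `F`-surjective -/
def SurjMod (F : B → B → L) (ψ : A → B) : Prop := ∀ b, ∃ a, F (ψ a) b = 1

/-- fuzzy equivalence relation -/
structure IsFuzzyEquiv (E : A → A → L) : Prop where
  refl : ∀ a, E a a = 1
  symm : ∀ a b, E a b = E b a
  trans : ∀ a b c, E a b * E b c ≤ E a c

/-- fuzzy equality -/
def IsFuzzyEquality (E : A → A → L) : Prop :=
  IsFuzzyEquiv E ∧ ∀ a b, E a b = 1 → a = b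

/-- the factor set `A/E = {E_a : a ∈ A}` -/
abbrev FactorSet (E : A → A → L) := {f : A → L // ∃ a, E a = f}

/-- the class `E_a` as an element of `A/E` -/
def toClass (E : A → A → L) (a : A) : FactorSet E := ⟨E a, a, rfl⟩

/-- a chosen representative of a class -/
noncomputable def rep {E : A → A → L} (c : FactorSet E) : A := c.2.choose

/-- the fuzzy relation `Ẽ` on `A/E` -/
noncomputable def tildeRel (E : A → A → L) : FactorSet E → FactorSet E → L :=
  fun c c' => E (rep c) (rep c')

open Classical in
/-- a chosen crisp description of `φ` -/
noncomputable def crispDesc [Nonempty B] (φ : A → B → L) : A → B :=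
  fun a => if h : ∃ b, φ a b = 1 then h.choose else Classical.arbitrary B

/-- the induced map `φ̃ : A/E_A^φ → B/E_B^φ`, `φ̃(E_a) = F_{ψ(a)}` -/
noncomputable def tilde [Nonempty B] (φ : A → B → L) :
    FactorSet (ker φ) → FactorSet (coker φ) :=
  fun c => toClass (coker φ) (crispDesc φ (rep c))

/-- the fuzzy transition relation `δ_x` -/
def FuzzyAutomaton.δx (M : FuzzyAutomaton L X A) (x : X) : A → A → L := fun a b => M.δ a x b

open Classical in
/-- transitions extended to words -/
noncomputable def deltaWord (M : FuzzyAutomaton L X A) : List X → A → A → L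
  | [] => fun a b => if a = b then (1 : L) else ⊥
  | x :: u => rcomp (M.δx x) (deltaWord M u)

/-- the fuzzy language recognized by `M` : `L(M)(u) = σ ∘ δ_u ∘ τ` -/
noncomputable def lang (M : FuzzyAutomaton L X A) (u : List X) : L :=
  sdot (scomp M.σ (deltaWord M u)) M.τ

/-- forward simulation -/
def IsForwardSim (MA : FuzzyAutomaton L X A) (MB : FuzzyAutomaton L X B)
    (φ : A → B → L) : Prop :=
  MA.σ ≤ scomp MB.σ (inv φ) ∧
  (∀ x, rcomp (inv φ) (MA.δx x) ≤ rcomp (MB.δx x) (inv φ)) ∧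
  rscomp (inv φ) MA.τ ≤ MB.τ

/-- backward simulation -/
def IsBackwardSim (MA : FuzzyAutomaton L X A) (MB : FuzzyAutomaton L X B)
    (φ : A → B → L) : Prop :=
  scomp MA.σ φ ≤ MB.σ ∧
  (∀ x, rcomp (MA.δx x) φ ≤ rcomp φ (MB.δx x)) ∧
  MA.τ ≤ rscomp φ MB.τ

/-- forward bisimulation -/
def IsForwardBisim (MA : FuzzyAutomaton L X A) (MB : FuzzyAutomaton L X B)
    (φ : A → B → L) : Prop :=
  IsForwardSim MA MB φ ∧ IsForwardSim MB MA (inv φ)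

/-- backward bisimulation -/
def IsBackwardBisim (MA : FuzzyAutomaton L X A) (MB : FuzzyAutomaton L X B)
    (φ : A → B → L) : Prop :=
  IsBackwardSim MA MB φ ∧ IsBackwardSim MB MA (inv φ)

/-- backward-forward bisimulation -/
def IsBFBisim (MA : FuzzyAutomaton L X A) (MB : FuzzyAutomaton L X B)
    (φ : A → B → L) : Prop :=
  IsBackwardSim MA MB φ ∧ IsForwardSim MB MA (inv φ)

/-- forward-backward bisimulation -/
def IsFBBisim (MA : FuzzyAutomaton L X A) (MB : FuzzyAutomaton L X B)
    (φ : A → B → L) : Prop :=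
  IsForwardSim MA MB φ ∧ IsBackwardSim MB MA (inv φ)

/-- isomorphism of fuzzy automata -/
def IsIso (MA : FuzzyAutomaton L X A) (MB : FuzzyAutomaton L X B) (h : A → B) : Prop :=
  Function.Bijective h ∧
  (∀ (a₁ : A) (x : X) (a₂ : A), MA.δ a₁ x a₂ = MB.δ (h a₁) x (h a₂)) ∧
  (∀ a, MA.σ a = MB.σ (h a)) ∧
  (∀ a, MA.τ a = MB.τ (h a))

/-- the factor fuzzy automaton `𝓐/E` -/
noncomputable def factorAut (M : FuzzyAutomaton L X A) (E : A → A → L) :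
    FuzzyAutomaton L X (FactorSet E) where
  δ := fun c x c' => rcomp (rcomp E (M.δx x)) E (rep c) (rep c')
  σ := fun c => scomp M.σ E (rep c)
  τ := fun c => rscomp E M.τ (rep c)

/-- the natural fuzzy relation `φ(a₁, E_{a₂}) = E(a₁,a₂)` between `A` and `A/E` -/
def natRel (E : A → A → L) : A → FactorSet E → L := fun a c => c.1 a

/-- the fuzzy relation `G/E` on `A/E` -/
noncomputable def quotRel (E G : A → A → L) : FactorSet E → FactorSet E → L :=
  fun c c' => G (rep c) (rep c')

/-- the fuzzy relation `φ(a₁, E_{a₂}) = G(a₁,a₂)` between `A` and `A/E` -/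
noncomputable def quotNatRel (E G : A → A → L) : A → FactorSet E → L :=
  fun a c => G a (rep c)

/-- UFB-equivalence of fuzzy automata -/
def UFBEquiv (MA : FuzzyAutomaton L X A) (MB : FuzzyAutomaton L X B) : Prop :=
  ∃ φ : A → B → L, IsUniform φ ∧ IsForwardBisim MA MB φ


section Aux

open CompleteResiduatedLattice

lemma adj {x y z : L} : x * y ≤ z ↔ x ≤ res y z := adjunction x y z

lemma le_one' (x : L) : x ≤ 1 := by
  rw [CompleteResiduatedLattice.one_eq_top]; exact le_top

lemma mul_le_left' {y z : L} (h : y ≤ z) (x : L) : x * y ≤ x * z := by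
  rw [mul_comm x y]
  exact adj.mpr (h.trans (adj.mp (mul_comm z x).le))

lemma mul_le_right' {x y : L} (h : x ≤ y) (z : L) : x * z ≤ y * z := by
  rw [mul_comm x z, mul_comm y z]; exact mul_le_left' h z

lemma mul_le_mul'' {x x' y y' : L} (h : x ≤ x') (h' : y ≤ y') : x * y ≤ x' * y' :=
  (mul_le_right' h y).trans (mul_le_left' h' x')

lemma mul_iSup' {ι : Sort*} (a : L) (f : ι → L) : a * (⨆ i, f i) = ⨆ i, a * f i := by
  refine le_antisymm ?_ (iSup_le fun i => mul_le_left' (le_iSup f i) a)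
  rw [mul_comm]
  exact adj.mpr (iSup_le fun i => adj.mp ((mul_comm (f i) a).le.trans (le_iSup (fun i => a * f i) i)))

lemma iSup_mul' {ι : Sort*} (a : L) (f : ι → L) : (⨆ i, f i) * a = ⨆ i, f i * a := by
  rw [mul_comm, mul_iSup']; exact iSup_congr fun i => mul_comm _ _

lemma res_self' {x : L} : res x x = 1 :=
  le_antisymm (le_one' _) (adj.mp (by rw [one_mul]))

lemma res_one_left {x : L} : res 1 x = x := by
  refine le_antisymm ?_ (adj.mp (by rw [mul_one]))
  have h := adj.mpr (le_refl (res (1 : L) x)); rwa [mul_one] at h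

lemma res_mul_le {x y : L} : res x y * x ≤ y := adj.mpr le_rfl

lemma bires_self' {x : L} : bires x x = 1 := by simp [bires, res_self']

lemma bires_symm' {x y : L} : bires x y = bires y x := inf_comm _ _

lemma bires_le₁ {x y : L} : bires x y ≤ res x y := inf_le_left

lemma bires_le₂ {x y : L} : bires x y ≤ res y x := inf_le_right

lemma le_bires' {x y z : L} (h1 : z * x ≤ y) (h2 : z * y ≤ x) : z ≤ bires x y :=
  le_inf (adj.mp h1) (adj.mp h2)

lemma bires_trans' {x y z : L} : bires x y * bires y z ≤ bires x z := by
  refine le_bires' ?_ ?_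
  · calc bires x y * bires y z * x
        = bires y z * (bires x y * x) := by
          rw [mul_comm (bires x y) (bires y z), mul_assoc]
      _ ≤ res y z * y := mul_le_mul'' bires_le₁ ((mul_le_right' bires_le₁ x).trans res_mul_le)
      _ ≤ z := res_mul_le
  · calc bires x y * bires y z * z
        = bires x y * (bires y z * z) := mul_assoc _ _ _
      _ ≤ res y x * y := mul_le_mul'' bires_le₂ ((mul_le_right' bires_le₂ z).trans res_mul_le)
      _ ≤ x := res_mul_le

lemma ker_refl (φ : A → B → L) (a : A) : ker φ a a = 1 :=
  le_antisymm (le_one' _) (le_iInf fun b => by rw [bires_self'])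

lemma ker_symm (φ : A → B → L) (a b : A) : ker φ a b = ker φ b a :=
  iInf_congr fun _ => bires_symm'

lemma ker_trans (φ : A → B → L) (a b c : A) : ker φ a b * ker φ b c ≤ ker φ a c :=
  le_iInf fun d => (mul_le_mul'' (iInf_le _ d) (iInf_le _ d)).trans bires_trans'

lemma coker_refl (φ : A → B → L) (b : B) : coker φ b b = 1 := ker_refl (inv φ) b

lemma coker_symm (φ : A → B → L) (b b' : B) : coker φ b b' = coker φ b' b :=
  ker_symm (inv φ) b b'

lemma coker_trans (φ : A → B → L) (a b c : B) : coker φ a b * coker φ b c ≤ coker φ a c :=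
  ker_trans (inv φ) a b c

lemma ker_class_eq {φ : A → B → L} {a b : A} (h : ker φ a b = 1) : ker φ a = ker φ b :=
  funext fun c => le_antisymm
    (by have h2 := ker_trans φ b a c; rwa [ker_symm φ b a, h, one_mul] at h2)
    (by have h2 := ker_trans φ a b c; rwa [h, one_mul] at h2)

lemma coker_class_eq {φ : A → B → L} {b b' : B} (h : coker φ b b' = 1) :
    coker φ b = coker φ b' := ker_class_eq (φ := inv φ) h

lemma rcomp_assoc {D : Type*} (R : A → B → L) (S : B → C → L) (T : C → D → L) :
    rcomp (rcomp R S) T = rcomp R (rcomp S T) := by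
  funext a d
  simp only [rcomp, iSup_mul', mul_iSup', mul_assoc]
  exact iSup_comm

lemma scomp_rcomp (f : A → L) (R : A → B → L) (S : B → C → L) :
    scomp f (rcomp R S) = scomp (scomp f R) S := by
  funext c
  simp only [scomp, rcomp, iSup_mul', mul_iSup', mul_assoc]
  exact iSup_comm

lemma rscomp_rcomp (R : A → B → L) (S : B → C → L) (g : C → L) :
    rscomp (rcomp R S) g = rscomp R (rscomp S g) := by
  funext a
  simp only [rscomp, rcomp, iSup_mul', mul_iSup', mul_assoc]
  exact iSup_comm

lemma rcomp_mono {R R' : A → B → L} {S S' : B → C → L} (h1 : R ≤ R') (h2 : S ≤ S') :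
    rcomp R S ≤ rcomp R' S' := by
  intro a c
  simp only [rcomp]
  exact iSup_le fun b => (mul_le_mul'' (h1 a b) (h2 b c)).trans (le_iSup (fun b => R' a b * S' b c) b)

lemma le_rcomp_left {G : A → A → L} (h : ∀ a, G a a = 1) (T : A → C → L) :
    T ≤ rcomp G T := by
  intro a c
  calc T a c = G a a * T a c := by rw [h, one_mul]
    _ ≤ _ := le_iSup (fun b => G a b * T b c) a

lemma le_rcomp_right {G : C → C → L} (h : ∀ c, G c c = 1) (T : A → C → L) :
    T ≤ rcomp T G := by
  intro a c
  calc T a c = T a c * G c c := by rw [h, mul_one]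
    _ ≤ _ := le_iSup (fun b => T a b * G b c) c

lemma le_scomp_pad {G : A → A → L} (h : ∀ a, G a a = 1) (f : A → L) :
    f ≤ scomp f G := by
  intro a
  calc f a = f a * G a a := by rw [h, mul_one]
    _ ≤ _ := le_iSup (fun b => f b * G b a) a

lemma le_rscomp_pad {G : A → A → L} (h : ∀ a, G a a = 1) (g : A → L) :
    g ≤ rscomp G g := by
  intro a
  calc g a = G a a * g a := by rw [h, one_mul]
    _ ≤ _ := le_iSup (fun b => G a b * g b) a

end Aux

section Aux2

open CompleteResiduatedLattice

lemma pff_point {φ : A → B → L} (hp : IsPFF φ) (a : A) (b : B) (a' : A) (b' : B) :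
    φ a b * φ a' b * φ a' b' ≤ φ a b' := by
  refine le_trans ?_ (hp a b')
  calc φ a b * φ a' b * φ a' b'
      ≤ (rcomp φ (inv φ)) a a' * φ a' b' :=
        mul_le_right' (le_iSup (fun c => φ a c * inv φ c a') b) _
    _ ≤ _ := le_iSup (fun a'' => (rcomp φ (inv φ)) a a'' * φ a'' b') a'

lemma isPFF_inv {φ : A → B → L} (hp : IsPFF φ) : IsPFF (inv φ) := by
  intro b a
  show (⨆ b', (⨆ a', φ a' b * φ a' b') * φ a b') ≤ φ a b
  refine iSup_le fun b' => ?_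
  rw [iSup_mul']
  refine iSup_le fun a' => ?_
  have h := pff_point hp a b' a' b
  calc φ a' b * φ a' b' * φ a b'
      = φ a b' * φ a' b' * φ a' b := by
        rw [mul_comm (φ a' b * φ a' b') (φ a b'), mul_comm (φ a' b) (φ a' b'), ← mul_assoc]
    _ ≤ φ a b := h

lemma phi_eq_ker {φ : A → B → L} (hp : IsPFF φ) {a₀ : A} {b : B} (hb : φ a₀ b = 1) (a : A) :
    φ a b = ker φ a a₀ := by
  refine le_antisymm (le_iInf fun b' => le_bires' ?_ ?_) ((iInf_le _ b).trans ?_)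
  · have h := pff_point hp a₀ b a b'
    rwa [hb, one_mul] at h
  · have h := pff_point hp a b a₀ b'
    rwa [hb, mul_one] at h
  · rw [hb]
    exact bires_le₂.trans res_one_left.le

lemma phi_eq_coker {φ : A → B → L} (hp : IsPFF φ) {b₀ : B} {a : A} (hb : φ a b₀ = 1) (b : B) :
    φ a b = coker φ b₀ b := by
  have h := phi_eq_ker (isPFF_inv hp) (a₀ := b₀) (show inv φ b₀ a = 1 from hb) b
  exact h.trans (ker_symm (inv φ) b b₀)

lemma crispDesc_one [Nonempty B] {φ : A → B → L} (hf : IsLFun φ) (a : A) :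
    φ a (crispDesc φ a) = 1 := by
  simp only [crispDesc]
  rw [dif_pos (hf a)]
  exact (hf a).choose_spec

lemma phi_eq_coker_psi [Nonempty B] {φ : A → B → L} (hp : IsPFF φ) (hf : IsLFun φ)
    (a : A) (b : B) : φ a b = coker φ (crispDesc φ a) b :=
  phi_eq_coker hp (crispDesc_one hf a) b

lemma ker_eq_coker_psi [Nonempty B] {φ : A → B → L} (hp : IsPFF φ) (hf : IsLFun φ)
    (a a' : A) : ker φ a a' = coker φ (crispDesc φ a) (crispDesc φ a') := by
  have h1 : φ a' (crispDesc φ a) = ker φ a' a := phi_eq_ker hp (crispDesc_one hf a) a'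
  have h2 : φ a' (crispDesc φ a) = coker φ (crispDesc φ a') (crispDesc φ a) :=
    phi_eq_coker_psi hp hf a' (crispDesc φ a)
  rw [ker_symm, ← h1, h2, coker_symm]

lemma rcomp_phi_inv {φ : A → B → L} (hp : IsPFF φ) (hf : IsLFun φ) :
    rcomp φ (inv φ) = ker φ := by
  funext a a'
  refine le_antisymm (iSup_le fun b => le_iInf fun b' => le_bires' ?_ ?_) ?_
  · have h := pff_point hp a' b a b'
    calc φ a b * φ a' b * φ a b' = φ a' b * φ a b * φ a b' := by
          rw [mul_comm (φ a b) (φ a' b)]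
      _ ≤ φ a' b' := h
  · exact pff_point hp a b a' b'
  · obtain ⟨b, hb⟩ := hf a'
    have h1 : ker φ a a' ≤ φ a b := by
      have h2 := (iInf_le (fun b => bires (φ a b) (φ a' b)) b).trans bires_le₂
      rwa [hb, res_one_left] at h2
    refine le_trans ?_ (le_iSup (fun b => φ a b * inv φ b a') b)
    show ker φ a a' ≤ φ a b * φ a' b
    rw [hb, mul_one]; exact h1

lemma rcomp_inv_phi {φ : A → B → L} (hp : IsPFF φ) (hs : IsSurj φ) :
    rcomp (inv φ) φ = coker φ :=
  rcomp_phi_inv (isPFF_inv hp) hs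

lemma rcomp_ker_phi {φ : A → B → L} (hp : IsPFF φ) (hf : IsLFun φ) :
    rcomp (ker φ) φ = φ :=
  le_antisymm (by rw [← rcomp_phi_inv hp hf]; exact hp) (le_rcomp_left (ker_refl φ) φ)

lemma rcomp_phi_coker {φ : A → B → L} (hp : IsPFF φ) (hs : IsSurj φ) :
    rcomp φ (coker φ) = φ :=
  le_antisymm (by rw [← rcomp_inv_phi hp hs, ← rcomp_assoc]; exact hp)
    (le_rcomp_right (coker_refl φ) φ)

lemma rcomp_ker_ker (φ : A → B → L) : rcomp (ker φ) (ker φ) = ker φ :=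
  le_antisymm (fun a c => iSup_le fun b => ker_trans φ a b c)
    (le_rcomp_right (ker_refl φ) (ker φ))

lemma rcomp_coker_coker (φ : A → B → L) : rcomp (coker φ) (coker φ) = coker φ :=
  rcomp_ker_ker (inv φ)

lemma inv_ker (φ : A → B → L) : inv (ker φ) = ker φ :=
  funext fun a => funext fun b => ker_symm φ b a

lemma inv_coker (φ : A → B → L) : inv (coker φ) = coker φ := inv_ker (inv φ)

end Aux2

section Aux3

open CompleteResiduatedLattice

lemma rcomp_inv_eval {φ : A → B → L} (hp : IsPFF φ) {a₀ : A} {b₀ : B} (h : φ a₀ b₀ = 1)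
    (T : A → C → L) (c : C) : rcomp (inv φ) T b₀ c = rcomp (ker φ) T a₀ c :=
  iSup_congr fun a => by
    rw [show inv φ b₀ a = ker φ a₀ a from (phi_eq_ker hp h a).trans (ker_symm φ a a₀)]

lemma rcomp_phi_eval {φ : A → B → L} (hp : IsPFF φ) {a₀ : A} {b₀ : B} (h : φ a₀ b₀ = 1)
    (T : C → A → L) (c : C) : rcomp T φ c b₀ = rcomp T (ker φ) c a₀ :=
  iSup_congr fun a => by rw [phi_eq_ker hp h a]

lemma scomp_phi_eval {φ : A → B → L} (hp : IsPFF φ) {a₀ : A} {b₀ : B} (h : φ a₀ b₀ = 1)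
    (f : A → L) : scomp f φ b₀ = scomp f (ker φ) a₀ :=
  iSup_congr fun a => by rw [phi_eq_ker hp h a]

lemma rscomp_inv_eval {φ : A → B → L} (hp : IsPFF φ) {a₀ : A} {b₀ : B} (h : φ a₀ b₀ = 1)
    (g : A → L) : rscomp (inv φ) g b₀ = rscomp (ker φ) g a₀ :=
  iSup_congr fun a => by
    rw [show inv φ b₀ a = ker φ a₀ a from (phi_eq_ker hp h a).trans (ker_symm φ a a₀)]

lemma rcomp_phi_as_coker [Nonempty B] {φ : A → B → L} (hp : IsPFF φ) (hf : IsLFun φ)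
    (T : B → C → L) (a : A) (c : C) :
    rcomp φ T a c = rcomp (coker φ) T (crispDesc φ a) c :=
  iSup_congr fun b => by rw [phi_eq_coker_psi hp hf a b]

lemma rscomp_phi_as_coker [Nonempty B] {φ : A → B → L} (hp : IsPFF φ) (hf : IsLFun φ)
    (g : B → L) (a : A) :
    rscomp φ g a = rscomp (coker φ) g (crispDesc φ a) :=
  iSup_congr fun b => by rw [phi_eq_coker_psi hp hf a b]

lemma scomp_congr' {E : A → A → L} (hsym : ∀ x y, E x y = E y x) {ρ a : A}
    (h : E ρ = E a) (f : A → L) : scomp f E ρ = scomp f E a :=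
  iSup_congr fun b => by rw [hsym b ρ, h, hsym a b]

lemma rscomp_congr' {E : A → A → L} {ρ a : A} (h : E ρ = E a) (g : A → L) :
    rscomp E g ρ = rscomp E g a :=
  iSup_congr fun b => by rw [show E ρ b = E a b from congrFun h b]

lemma rcompR_congr' {E : A → A → L} (hsym : ∀ x y, E x y = E y x) {ρ a : A}
    (h : E ρ = E a) (T : C → A → L) (c : C) : rcomp T E c ρ = rcomp T E c a :=
  iSup_congr fun b => by rw [hsym b ρ, h, hsym a b]

lemma sandwich_congr {E : A → A → L} (hsym : ∀ x y, E x y = E y x) {ρ₁ a₁ ρ₂ a₂ : A}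
    (h1 : E ρ₁ = E a₁) (h2 : E ρ₂ = E a₂) (T : A → A → L) :
    rcomp (rcomp E T) E ρ₁ ρ₂ = rcomp (rcomp E T) E a₁ a₂ := by
  refine iSup_congr fun c => ?_
  rw [show E c ρ₂ = E c a₂ from by rw [hsym c ρ₂, h2, hsym a₂ c]]
  congr 1
  exact iSup_congr fun b => by rw [show E ρ₁ b = E a₁ b from congrFun h1 b]

lemma rep_spec {E : A → A → L} (c : FactorSet E) : E (rep c) = c.1 := c.2.choose_spec

lemma ker_rep_one {φ : A → B → L} (a : A) :
    ker φ a (rep (toClass (ker φ) a)) = 1 := by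
  have h : ker φ (rep (toClass (ker φ) a)) = ker φ a := rep_spec (toClass (ker φ) a)
  have h2 := congrFun h (rep (toClass (ker φ) a))
  rw [ker_refl] at h2
  exact h2.symm

lemma phi_rep_tilde [Nonempty B] {φ : A → B → L} (hp : IsPFF φ) (hf : IsLFun φ)
    (c : FactorSet (ker φ)) : φ (rep c) (rep (tilde φ c)) = 1 := by
  have h1 : coker φ (rep (tilde φ c)) = coker φ (crispDesc φ (rep c)) :=
    rep_spec (tilde φ c)
  have h2 := congrFun h1 (rep (tilde φ c))
  rw [coker_refl] at h2
  exact (phi_eq_coker_psi hp hf _ _).trans h2.symm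

lemma tilde_rep_class [Nonempty B] {φ : A → B → L} (hp : IsPFF φ) (hf : IsLFun φ)
    (a : A) :
    coker φ (rep (tilde φ (toClass (ker φ) a))) = coker φ (crispDesc φ a) := by
  have h1 : coker φ (rep (tilde φ (toClass (ker φ) a)))
      = coker φ (crispDesc φ (rep (toClass (ker φ) a))) := rep_spec _
  have h3 : coker φ (crispDesc φ a) (crispDesc φ (rep (toClass (ker φ) a))) = 1 := by
    rw [← ker_eq_coker_psi hp hf]
    exact ker_rep_one a
  exact h1.trans (coker_class_eq h3).symm

lemma phi_toClass_tilde [Nonempty B] {φ : A → B → L} (hp : IsPFF φ) (hf : IsLFun φ)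
    (a : A) : φ a (rep (tilde φ (toClass (ker φ) a))) = 1 := by
  set β := rep (tilde φ (toClass (ker φ) a)) with hβ
  set ρ := rep (toClass (ker φ) a) with hρ
  have h2 : φ ρ β = 1 := phi_rep_tilde hp hf (toClass (ker φ) a)
  refine le_antisymm (le_one' _) ?_
  have h := congrFun (congrFun (rcomp_ker_phi hp hf) a) β
  rw [← h]
  refine le_trans ?_ (le_iSup (fun a' => ker φ a a' * φ a' β) ρ)
  rw [ker_rep_one a, h2, one_mul]

lemma tilde_injective [Nonempty B] {φ : A → B → L} (hp : IsPFF φ) (hf : IsLFun φ) :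
    Function.Injective (tilde φ) := by
  intro c c' h
  have h1 : φ (rep c) (rep (tilde φ c)) = 1 := phi_rep_tilde hp hf c
  have h2 : φ (rep c') (rep (tilde φ c)) = 1 := by rw [h]; exact phi_rep_tilde hp hf c'
  have h3 : ker φ (rep c) (rep c') = 1 := (phi_eq_ker hp h2 (rep c)).symm.trans h1
  exact Subtype.ext ((rep_spec c).symm.trans ((ker_class_eq h3).trans (rep_spec c')))

lemma tilde_surjective [Nonempty B] {φ : A → B → L} (hp : IsPFF φ) (hf : IsLFun φ)
    (hs : IsSurj φ) : Function.Surjective (tilde φ) := by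
  intro d
  obtain ⟨a, ha⟩ := hs (rep d)
  refine ⟨toClass (ker φ) a, ?_⟩
  have hβ : φ a (rep (tilde φ (toClass (ker φ) a))) = 1 := phi_toClass_tilde hp hf a
  apply Subtype.ext
  have e1 : (tilde φ (toClass (ker φ) a)).1
      = coker φ (rep (tilde φ (toClass (ker φ) a))) := (rep_spec _).symm
  have e2 : d.1 = coker φ (rep d) := (rep_spec d).symm
  rw [e1, e2]
  apply coker_class_eq
  rw [← phi_eq_coker hp hβ (rep d)]
  exact ha

end Aux3

/-- uniform backward-forward bisimulations via factor automata -/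
theorem uniform_bfBisim_iff_factor {L X A B : Type*} [CompleteResiduatedLattice L]
    [Nonempty A] [Nonempty B]
    (MA : FuzzyAutomaton L X A) (MB : FuzzyAutomaton L X B)
    (φ : A → B → L) (hu : IsUniform φ) :
    IsBFBisim MA MB φ ↔
      (IsForwardBisim MA MA (ker φ) ∧
       IsBackwardBisim MB MB (coker φ) ∧
       IsIso (factorAut MA (ker φ)) (factorAut MB (coker φ)) (tilde φ)) := by
  obtain ⟨hp, hf, hs⟩ := hu
  constructor
  · rintro ⟨hbs, hfs⟩
    have hσ : scomp MA.σ φ = MB.σ := le_antisymm hbs.1 hfs.1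
    have hδ : ∀ x, rcomp (MA.δx x) φ = rcomp φ (MB.δx x) := fun x =>
      le_antisymm (hbs.2.1 x) (hfs.2.1 x)
    have hτ : MA.τ = rscomp φ MB.τ := le_antisymm hbs.2.2 hfs.2.2
    -- key relational identities
    have keyE : ∀ x, rcomp (rcomp (ker φ) (MA.δx x)) (ker φ)
        = rcomp (MA.δx x) (ker φ) := by
      intro x
      calc rcomp (rcomp (ker φ) (MA.δx x)) (ker φ)
          = rcomp (rcomp (ker φ) (MA.δx x)) (rcomp φ (inv φ)) := by
            rw [rcomp_phi_inv hp hf]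
        _ = rcomp (rcomp (rcomp (ker φ) (MA.δx x)) φ) (inv φ) :=
            (rcomp_assoc (rcomp (ker φ) (MA.δx x)) φ (inv φ)).symm
        _ = rcomp (rcomp (ker φ) (rcomp (MA.δx x) φ)) (inv φ) := by
            rw [rcomp_assoc (ker φ) (MA.δx x) φ]
        _ = rcomp (rcomp (ker φ) (rcomp φ (MB.δx x))) (inv φ) := by rw [hδ x]
        _ = rcomp (rcomp (rcomp (ker φ) φ) (MB.δx x)) (inv φ) := by
            rw [rcomp_assoc (ker φ) φ (MB.δx x)]
        _ = rcomp (rcomp φ (MB.δx x)) (inv φ) := by rw [rcomp_ker_phi hp hf]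
        _ = rcomp (rcomp (MA.δx x) φ) (inv φ) := by rw [hδ x]
        _ = rcomp (MA.δx x) (rcomp φ (inv φ)) := by rw [rcomp_assoc]
        _ = rcomp (MA.δx x) (ker φ) := by rw [rcomp_phi_inv hp hf]
    have keyτ : rscomp (ker φ) MA.τ = MA.τ := by
      calc rscomp (ker φ) MA.τ = rscomp (ker φ) (rscomp φ MB.τ) := by rw [← hτ]
        _ = rscomp (rcomp (ker φ) φ) MB.τ := (rscomp_rcomp _ _ _).symm
        _ = rscomp φ MB.τ := by rw [rcomp_ker_phi hp hf]
        _ = MA.τ := hτ.symm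
    have keyσF : scomp MB.σ (coker φ) = MB.σ := by
      calc scomp MB.σ (coker φ) = scomp (scomp MA.σ φ) (coker φ) := by rw [hσ]
        _ = scomp MA.σ (rcomp φ (coker φ)) := (scomp_rcomp _ _ _).symm
        _ = scomp MA.σ φ := by rw [rcomp_phi_coker hp hs]
        _ = MB.σ := hσ
    have hFδ : ∀ x, rcomp (coker φ) (MB.δx x)
        = rcomp (inv φ) (rcomp (MA.δx x) φ) := by
      intro x
      calc rcomp (coker φ) (MB.δx x)
          = rcomp (rcomp (inv φ) φ) (MB.δx x) := by rw [rcomp_inv_phi hp hs]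
        _ = rcomp (inv φ) (rcomp φ (MB.δx x)) := rcomp_assoc _ _ _
        _ = rcomp (inv φ) (rcomp (MA.δx x) φ) := by rw [hδ x]
    have keyF : ∀ x, rcomp (rcomp (coker φ) (MB.δx x)) (coker φ)
        = rcomp (coker φ) (MB.δx x) := by
      intro x
      calc rcomp (rcomp (coker φ) (MB.δx x)) (coker φ)
          = rcomp (rcomp (inv φ) (rcomp (MA.δx x) φ)) (coker φ) := by rw [hFδ x]
        _ = rcomp (inv φ) (rcomp (rcomp (MA.δx x) φ) (coker φ)) := rcomp_assoc _ _ _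
        _ = rcomp (inv φ) (rcomp (MA.δx x) (rcomp φ (coker φ))) := by
            rw [rcomp_assoc (MA.δx x) φ (coker φ)]
        _ = rcomp (inv φ) (rcomp (MA.δx x) φ) := by rw [rcomp_phi_coker hp hs]
        _ = rcomp (coker φ) (MB.δx x) := (hFδ x).symm
    have fsimE : IsForwardSim MA MA (ker φ) := by
      refine ⟨?_, ?_, ?_⟩
      · rw [inv_ker]; exact le_scomp_pad (ker_refl φ) MA.σ
      · intro x
        rw [inv_ker]
        calc rcomp (ker φ) (MA.δx x)
            ≤ rcomp (rcomp (ker φ) (MA.δx x)) (ker φ) := le_rcomp_right (ker_refl φ) _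
          _ = rcomp (MA.δx x) (ker φ) := keyE x
      · rw [inv_ker, keyτ]
    have bsimF : IsBackwardSim MB MB (coker φ) := by
      refine ⟨keyσF.le, ?_, le_rscomp_pad (coker_refl φ) MB.τ⟩
      intro x
      calc rcomp (MB.δx x) (coker φ)
          ≤ rcomp (coker φ) (rcomp (MB.δx x) (coker φ)) := le_rcomp_left (coker_refl φ) _
        _ = rcomp (rcomp (coker φ) (MB.δx x)) (coker φ) := (rcomp_assoc _ _ _).symm
        _ = rcomp (coker φ) (MB.δx x) := keyF x
    refine ⟨⟨fsimE, ?_⟩, ⟨bsimF, ?_⟩, ?_⟩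
    · rw [inv_ker]; exact fsimE
    · rw [inv_coker]; exact bsimF
    · refine ⟨⟨tilde_injective hp hf, tilde_surjective hp hf hs⟩, ?_, ?_, ?_⟩
      · intro c x c'
        have h₁ := phi_rep_tilde hp hf c
        have h₂ := phi_rep_tilde hp hf c'
        show rcomp (rcomp (ker φ) (MA.δx x)) (ker φ) (rep c) (rep c')
            = rcomp (rcomp (coker φ) (MB.δx x)) (coker φ) (rep (tilde φ c)) (rep (tilde φ c'))
        have hrel : rcomp (rcomp (coker φ) (MB.δx x)) (coker φ)
            = rcomp (inv φ) (rcomp (MA.δx x) φ) := by rw [keyF x, hFδ x]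
        rw [hrel, rcomp_inv_eval hp h₁, ← rcomp_assoc, rcomp_phi_eval hp h₂]
      · intro c
        have h₁ := phi_rep_tilde hp hf c
        show scomp MA.σ (ker φ) (rep c) = scomp MB.σ (coker φ) (rep (tilde φ c))
        rw [keyσF, ← hσ, scomp_phi_eval hp h₁]
      · intro c
        have h₁ := phi_rep_tilde hp hf c
        show rscomp (ker φ) MA.τ (rep c) = rscomp (coker φ) MB.τ (rep (tilde φ c))
        have hFτ : rscomp (coker φ) MB.τ = rscomp (inv φ) MA.τ := by
          rw [← rcomp_inv_phi hp hs, rscomp_rcomp, ← hτ]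
        rw [hFτ, rscomp_inv_eval hp h₁, keyτ]
  · rintro ⟨hE, hF, hiso⟩
    have hEδ : ∀ x, rcomp (ker φ) (MA.δx x) ≤ rcomp (MA.δx x) (ker φ) := by
      intro x; have h := hE.1.2.1 x; rwa [inv_ker] at h
    have D1 : ∀ x, rcomp (rcomp (ker φ) (MA.δx x)) (ker φ)
        = rcomp (MA.δx x) (ker φ) := by
      intro x
      refine le_antisymm ?_ ?_
      · calc rcomp (rcomp (ker φ) (MA.δx x)) (ker φ)
            ≤ rcomp (rcomp (MA.δx x) (ker φ)) (ker φ) := rcomp_mono (hEδ x) le_rfl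
          _ = rcomp (MA.δx x) (rcomp (ker φ) (ker φ)) := rcomp_assoc _ _ _
          _ = rcomp (MA.δx x) (ker φ) := by rw [rcomp_ker_ker]
      · calc rcomp (MA.δx x) (ker φ)
            ≤ rcomp (ker φ) (rcomp (MA.δx x) (ker φ)) := le_rcomp_left (ker_refl φ) _
          _ = rcomp (rcomp (ker φ) (MA.δx x)) (ker φ) := (rcomp_assoc _ _ _).symm
    have D2 : rscomp (ker φ) MA.τ = MA.τ := by
      refine le_antisymm ?_ (le_rscomp_pad (ker_refl φ) MA.τ)
      have h := hE.1.2.2; rwa [inv_ker] at h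
    have D3 : ∀ x, rcomp (rcomp (coker φ) (MB.δx x)) (coker φ)
        = rcomp (coker φ) (MB.δx x) := by
      intro x
      refine le_antisymm ?_ (le_rcomp_right (coker_refl φ) _)
      calc rcomp (rcomp (coker φ) (MB.δx x)) (coker φ)
          = rcomp (coker φ) (rcomp (MB.δx x) (coker φ)) := rcomp_assoc _ _ _
        _ ≤ rcomp (coker φ) (rcomp (coker φ) (MB.δx x)) := rcomp_mono le_rfl (hF.1.2.1 x)
        _ = rcomp (rcomp (coker φ) (coker φ)) (MB.δx x) := (rcomp_assoc _ _ _).symm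
        _ = rcomp (coker φ) (MB.δx x) := by rw [rcomp_coker_coker]
    have D3σ : scomp MB.σ (coker φ) = MB.σ :=
      le_antisymm hF.1.1 (le_scomp_pad (coker_refl φ) MB.σ)
    -- translation of the isomorphism conditions
    have Cδ : ∀ x (a₁ a₂ : A), rcomp (rcomp (ker φ) (MA.δx x)) (ker φ) a₁ a₂
        = rcomp (rcomp (coker φ) (MB.δx x)) (coker φ) (crispDesc φ a₁) (crispDesc φ a₂) := by
      intro x a₁ a₂
      have hi := hiso.2.1 (toClass (ker φ) a₁) x (toClass (ker φ) a₂)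
      have r1 : ker φ (rep (toClass (ker φ) a₁)) = ker φ a₁ := rep_spec _
      have r2 : ker φ (rep (toClass (ker φ) a₂)) = ker φ a₂ := rep_spec _
      have e1 := sandwich_congr (ker_symm φ) r1 r2 (MA.δx x)
      have e2 := sandwich_congr (coker_symm φ) (tilde_rep_class hp hf a₁)
        (tilde_rep_class hp hf a₂) (MB.δx x)
      exact e1.symm.trans (hi.trans e2)
    have Cσ : ∀ a : A, scomp MA.σ (ker φ) a
        = scomp MB.σ (coker φ) (crispDesc φ a) := by
      intro a
      have hi := hiso.2.2.1 (toClass (ker φ) a)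
      have r1 : ker φ (rep (toClass (ker φ) a)) = ker φ a := rep_spec _
      exact (scomp_congr' (ker_symm φ) r1 MA.σ).symm.trans
        (hi.trans (scomp_congr' (coker_symm φ) (tilde_rep_class hp hf a) MB.σ))
    have Cτ : ∀ a : A, rscomp (ker φ) MA.τ a
        = rscomp (coker φ) MB.τ (crispDesc φ a) := by
      intro a
      have hi := hiso.2.2.2 (toClass (ker φ) a)
      have r1 : ker φ (rep (toClass (ker φ) a)) = ker φ a := rep_spec _
      exact (rscomp_congr' r1 MA.τ).symm.trans
        (hi.trans (rscomp_congr' (tilde_rep_class hp hf a) MB.τ))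
    -- the three equalities of a backward-forward bisimulation
    have EQδ : ∀ x, rcomp (MA.δx x) φ = rcomp φ (MB.δx x) := by
      intro x
      funext a b
      obtain ⟨a₀, ha₀⟩ := hs b
      have hcl : coker φ (crispDesc φ a₀) = coker φ b := by
        refine coker_class_eq ?_
        rw [← phi_eq_coker_psi hp hf a₀ b]; exact ha₀
      calc rcomp (MA.δx x) φ a b
          = rcomp (MA.δx x) (ker φ) a a₀ := rcomp_phi_eval hp ha₀ (MA.δx x) a
        _ = rcomp (rcomp (ker φ) (MA.δx x)) (ker φ) a a₀ :=
            (congrFun (congrFun (D1 x) a) a₀).symm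
        _ = rcomp (rcomp (coker φ) (MB.δx x)) (coker φ)
              (crispDesc φ a) (crispDesc φ a₀) := Cδ x a a₀
        _ = rcomp (rcomp (coker φ) (MB.δx x)) (coker φ) (crispDesc φ a) b :=
            rcompR_congr' (coker_symm φ) hcl _ _
        _ = rcomp (coker φ) (MB.δx x) (crispDesc φ a) b := congrFun (congrFun (D3 x) _) b
        _ = rcomp φ (MB.δx x) a b := (rcomp_phi_as_coker hp hf (MB.δx x) a b).symm
    have EQσ : scomp MA.σ φ = MB.σ := by
      funext b
      obtain ⟨a₀, ha₀⟩ := hs b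
      have hcl : coker φ (crispDesc φ a₀) = coker φ b := by
        refine coker_class_eq ?_
        rw [← phi_eq_coker_psi hp hf a₀ b]; exact ha₀
      calc scomp MA.σ φ b = scomp MA.σ (ker φ) a₀ := scomp_phi_eval hp ha₀ MA.σ
        _ = scomp MB.σ (coker φ) (crispDesc φ a₀) := Cσ a₀
        _ = scomp MB.σ (coker φ) b := scomp_congr' (coker_symm φ) hcl MB.σ
        _ = MB.σ b := congrFun D3σ b
    have EQτ : rscomp φ MB.τ = MA.τ := by
      funext a
      calc rscomp φ MB.τ a
          = rscomp (coker φ) MB.τ (crispDesc φ a) := rscomp_phi_as_coker hp hf MB.τ a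
        _ = rscomp (ker φ) MA.τ a := (Cτ a).symm
        _ = MA.τ a := congrFun D2 a
    exact ⟨⟨EQσ.le, fun x => (EQδ x).le, EQτ.ge⟩,
      ⟨EQσ.ge, fun x => (EQδ x).ge, EQτ.le⟩⟩

end FuzzyAutomataBisim
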